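/- arXiv:2602.03794 — 2 statements merged into one kernel-verified Lean document; each statement's English description precedes it below -/
import Mathlib

section
/- Let X, Y and Z_1, …, Z_n be finitely-valued random variables on a common probability space, and fix i ∈ {1, …, n}. If Z_i is conditionally independent of Z_{<i} = (Z_1, …, Z_{i−1}) given (X, Y) (equivalently, I(Z_i; Z_{<i} | X, Y) = 0), then the redundancy term is bounded by the single-call information: I(Z_i; Z_{<i} | X) ≤ I(Z_i; Y | X). -/
open MeasureTheory

/-- Shannon entropy (in nats) of a finitely-valued random variable `X` under `μ`. -/
noncomputable def entH {Ω : Type*} [MeasurableSpace Ω] (μ : Measure Ω)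
    {S : Type*} [Fintype S] (X : Ω → S) : ℝ :=
  ∑ s : S, Real.negMulLog ((μ (X ⁻¹' {s})).toReal)

/-- Conditional Shannon entropy `H(Y | X) = H(X, Y) - H(X)`. -/
noncomputable def condEntH {Ω : Type*} [MeasurableSpace Ω] (μ : Measure Ω)
    {S T : Type*} [Fintype S] [Fintype T] (Y : Ω → T) (X : Ω → S) : ℝ :=
  entH μ (fun ω => (X ω, Y ω)) - entH μ X

/-- Conditional mutual information `I(A; B | C) = H(A | C) - H(A | (B, C))`. -/
noncomputable def condMI {Ω : Type*} [MeasurableSpace Ω] (μ : Measure Ω)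
    {A B C : Type*} [Fintype A] [Fintype B] [Fintype C]
    (fA : Ω → A) (fB : Ω → B) (fC : Ω → C) : ℝ :=
  condEntH μ fA fC - condEntH μ fA (fun ω => (fB ω, fC ω))



private lemma gibbs {ι : Type*} (s : Finset ι) (p q : ι → ℝ)
    (hp : ∀ i ∈ s, 0 ≤ p i) (hq : ∀ i ∈ s, 0 ≤ q i)
    (hpq : ∀ i ∈ s, p i ≠ 0 → 0 < q i)
    (h : ∑ i ∈ s, q i ≤ ∑ i ∈ s, p i) :
    ∑ i ∈ s, p i * (Real.log (q i) - Real.log (p i)) ≤ 0 := by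
  have key : ∀ i ∈ s, p i * (Real.log (q i) - Real.log (p i)) ≤ q i - p i := by
    intro i hi
    rcases eq_or_ne (p i) 0 with h0 | h0
    · simpa [h0] using hq i hi
    · have hp' : 0 < p i := lt_of_le_of_ne (hp i hi) (Ne.symm h0)
      have hq' := hpq i hi h0
      have hlog : Real.log (q i) - Real.log (p i) = Real.log (q i / p i) :=
        (Real.log_div (ne_of_gt hq') h0).symm
      rw [hlog]
      have hb := Real.log_le_sub_one_of_pos (div_pos hq' hp')
      have : p i * Real.log (q i / p i) ≤ p i * (q i / p i - 1) := by nlinarith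
      calc p i * Real.log (q i / p i) ≤ p i * (q i / p i - 1) := this
        _ = q i - p i := by field_simp
  calc ∑ i ∈ s, p i * (Real.log (q i) - Real.log (p i)) ≤ ∑ i ∈ s, (q i - p i) :=
        Finset.sum_le_sum key
    _ ≤ 0 := by rw [Finset.sum_sub_distrib]; linarith

private lemma sum2_comm {A B : Type*} [Fintype A] [Fintype B] (f : A → B → ℝ) :
    ∑ a, ∑ b, f a b = ∑ b, ∑ a, f a b := Finset.sum_comm

private lemma sum3_comm {A B C : Type*} [Fintype A] [Fintype B] [Fintype C]
    (f : A → B → C → ℝ) :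
    ∑ a, ∑ b, ∑ c, f a b c = ∑ c, ∑ a, ∑ b, f a b c := by
  have h1 : (∑ a, ∑ b, ∑ c, f a b c) = ∑ a, ∑ c, ∑ b, f a b c :=
    Finset.sum_congr rfl fun a _ => sum2_comm _
  rw [h1]
  exact sum2_comm (fun a c => ∑ b, f a b c)

private lemma findist {A B C : Type*} [Fintype A] [Fintype B] [Fintype C]
    (p : A → B → C → ℝ) (hp0 : ∀ a b c, 0 ≤ p a b c)
    (hp1 : ∑ a, ∑ b, ∑ c, p a b c = 1) :
    (∑ a, ∑ b, ∑ c, Real.negMulLog (p a b c))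
      + ∑ c, Real.negMulLog (∑ a, ∑ b, p a b c)
    ≤ (∑ c, ∑ a, Real.negMulLog (∑ b, p a b c))
      + ∑ b, ∑ c, Real.negMulLog (∑ a, p a b c) := by
  classical
  set pC : C → ℝ := fun c => ∑ a, ∑ b, p a b c with hpC
  set pAC : A → C → ℝ := fun a c => ∑ b, p a b c with hpAC
  set pBC : B → C → ℝ := fun b c => ∑ a, p a b c with hpBC
  have hpC0 : ∀ c, 0 ≤ pC c := fun c =>
    Finset.sum_nonneg fun a _ => Finset.sum_nonneg fun b _ => hp0 a b c
  have hpAC0 : ∀ a c, 0 ≤ pAC a c := fun a c => Finset.sum_nonneg fun b _ => hp0 a b c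
  have hpBC0 : ∀ b c, 0 ≤ pBC b c := fun b c => Finset.sum_nonneg fun a _ => hp0 a b c
  have hle_AC : ∀ a b c, p a b c ≤ pAC a c := fun a b c =>
    Finset.single_le_sum (fun b' _ => hp0 a b' c) (Finset.mem_univ b)
  have hle_BC : ∀ a b c, p a b c ≤ pBC b c := fun a b c =>
    Finset.single_le_sum (fun a' _ => hp0 a' b c) (Finset.mem_univ a)
  have hle_C : ∀ a c, pAC a c ≤ pC c := fun a c =>
    Finset.single_le_sum (fun a' _ => hpAC0 a' c) (Finset.mem_univ a)
  -- the q function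
  set q : A → B → C → ℝ := fun a b c => pAC a c * pBC b c / pC c with hq
  have hq0 : ∀ a b c, 0 ≤ q a b c := fun a b c =>
    div_nonneg (mul_nonneg (hpAC0 a c) (hpBC0 b c)) (hpC0 c)
  have hqpos : ∀ a b c, p a b c ≠ 0 → 0 < q a b c := by
    intro a b c h0
    have hp' : 0 < p a b c := lt_of_le_of_ne (hp0 a b c) (Ne.symm h0)
    have h1 : 0 < pAC a c := lt_of_lt_of_le hp' (hle_AC a b c)
    have h2 : 0 < pBC b c := lt_of_lt_of_le hp' (hle_BC a b c)
    have h3 : 0 < pC c := lt_of_lt_of_le h1 (hle_C a c)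
    exact div_pos (mul_pos h1 h2) h3
  -- sum of q is at most 1
  have hsumC : ∑ c, pC c = 1 := by
    rw [← hp1]; exact (sum3_comm p).symm
  have hqsum : ∑ a, ∑ b, ∑ c, q a b c ≤ 1 := by
    rw [sum3_comm q]
    have hc : ∀ c, ∑ a, ∑ b, q a b c ≤ pC c := by
      intro c
      have h1 : ∑ a, ∑ b, q a b c = (∑ a, pAC a c) * (∑ b, pBC b c) / pC c := by
        rw [Finset.sum_mul_sum]
        rw [Finset.sum_div]
        refine Finset.sum_congr rfl fun a _ => ?_
        rw [Finset.sum_div]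
      have h2 : ∑ a, pAC a c = pC c := rfl
      have h3 : ∑ b, pBC b c = pC c := sum2_comm (fun b a => p a b c)
      rw [h1, h2, h3]
      rcases eq_or_ne (pC c) 0 with h0 | h0
      · simp [h0]
      · rw [mul_div_assoc, div_self h0, mul_one]
    calc ∑ c, ∑ a, ∑ b, q a b c ≤ ∑ c, pC c := Finset.sum_le_sum fun c _ => hc c
      _ = 1 := hsumC
  -- Gibbs inequality
  have hG : ∑ x : A × B × C, p x.1 x.2.1 x.2.2 *
      (Real.log (q x.1 x.2.1 x.2.2) - Real.log (p x.1 x.2.1 x.2.2)) ≤ 0 := by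
    refine gibbs Finset.univ _ _ (fun x _ => hp0 _ _ _) (fun x _ => hq0 _ _ _)
      (fun x _ h0 => hqpos _ _ _ h0) ?_

    have h1 : ∑ x : A × B × C, q x.1 x.2.1 x.2.2 = ∑ a, ∑ b, ∑ c, q a b c := by
      simp [Fintype.sum_prod_type]
    have h2 : ∑ x : A × B × C, p x.1 x.2.1 x.2.2 = ∑ a, ∑ b, ∑ c, p a b c := by
      simp [Fintype.sum_prod_type]
    rw [h1, h2, hp1]
    exact hqsum
  have hG' : ∑ a, ∑ b, ∑ c, p a b c * (Real.log (q a b c) - Real.log (p a b c)) ≤ 0 := by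
    have h2 : ∑ x : A × B × C, p x.1 x.2.1 x.2.2 *
        (Real.log (q x.1 x.2.1 x.2.2) - Real.log (p x.1 x.2.1 x.2.2))
        = ∑ a, ∑ b, ∑ c, p a b c * (Real.log (q a b c) - Real.log (p a b c)) := by
      simp [Fintype.sum_prod_type]
    linarith [hG, h2.symm.trans_le hG]
  -- per-term expansion of the logarithm
  have hterm : ∀ a b c, p a b c * (Real.log (q a b c) - Real.log (p a b c))
      = p a b c * Real.log (pAC a c) + p a b c * Real.log (pBC b c)
        - p a b c * Real.log (pC c) - p a b c * Real.log (p a b c) := by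
    intro a b c
    rcases eq_or_ne (p a b c) 0 with h0 | h0
    · simp [h0]
    · have hp' : 0 < p a b c := lt_of_le_of_ne (hp0 a b c) (Ne.symm h0)
      have h1 : 0 < pAC a c := lt_of_lt_of_le hp' (hle_AC a b c)
      have h2 : 0 < pBC b c := lt_of_lt_of_le hp' (hle_BC a b c)
      have h3 : 0 < pC c := lt_of_lt_of_le h1 (hle_C a c)
      have hlq : Real.log (q a b c)
          = Real.log (pAC a c) + Real.log (pBC b c) - Real.log (pC c) := by
        rw [show q a b c = pAC a c * pBC b c / pC c from rfl,
          Real.log_div (by positivity) (ne_of_gt h3), Real.log_mul (ne_of_gt h1) (ne_of_gt h2)]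
      rw [hlq]; ring
  simp only [hterm] at hG'
  simp only [Finset.sum_sub_distrib, Finset.sum_add_distrib] at hG'
  -- identify the four sums
  have hT1 : ∑ a, ∑ b, ∑ c, p a b c * Real.log (pAC a c)
      = ∑ c, ∑ a, pAC a c * Real.log (pAC a c) := by
    have h : ∀ a, ∑ b, ∑ c, p a b c * Real.log (pAC a c)
        = ∑ c, pAC a c * Real.log (pAC a c) := by
      intro a
      rw [sum2_comm (fun b c => p a b c * Real.log (pAC a c))]
      exact Finset.sum_congr rfl fun c _ => (Finset.sum_mul _ _ _).symm
    rw [Finset.sum_congr rfl fun a _ => h a]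
    exact sum2_comm _
  have hT2 : ∑ a, ∑ b, ∑ c, p a b c * Real.log (pBC b c)
      = ∑ b, ∑ c, pBC b c * Real.log (pBC b c) := by
    rw [sum2_comm (fun a b => ∑ c, p a b c * Real.log (pBC b c))]
    refine Finset.sum_congr rfl fun b _ => ?_
    rw [sum2_comm (fun a c => p a b c * Real.log (pBC b c))]
    exact Finset.sum_congr rfl fun c _ => (Finset.sum_mul _ _ _).symm
  have hT3 : ∑ a, ∑ b, ∑ c, p a b c * Real.log (pC c)
      = ∑ c, pC c * Real.log (pC c) := by
    rw [sum3_comm (fun a b c => p a b c * Real.log (pC c))]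
    refine Finset.sum_congr rfl fun c _ => ?_
    rw [show pC c * Real.log (pC c) = ∑ a, (∑ b, p a b c) * Real.log (pC c) from
      (Finset.sum_mul _ _ _)]
    exact Finset.sum_congr rfl fun a _ => (Finset.sum_mul _ _ _).symm
  rw [hT1, hT2, hT3] at hG'
  -- rewrite the goal through negMulLog
  have e0 : ∑ a, ∑ b, ∑ c, Real.negMulLog (p a b c)
      = -∑ a, ∑ b, ∑ c, p a b c * Real.log (p a b c) := by
    simp [Real.negMulLog, neg_mul, ← Finset.sum_neg_distrib]
  have e1 : ∑ c, Real.negMulLog (pC c) = -∑ c, pC c * Real.log (pC c) := by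
    simp [Real.negMulLog, neg_mul, ← Finset.sum_neg_distrib]
  have e2 : ∑ c, ∑ a, Real.negMulLog (pAC a c) = -∑ c, ∑ a, pAC a c * Real.log (pAC a c) := by
    simp [Real.negMulLog, neg_mul, ← Finset.sum_neg_distrib]
  have e3 : ∑ b, ∑ c, Real.negMulLog (pBC b c) = -∑ b, ∑ c, pBC b c * Real.log (pBC b c) := by
    simp [Real.negMulLog, neg_mul, ← Finset.sum_neg_distrib]
  rw [show (∑ c, Real.negMulLog (∑ a, ∑ b, p a b c)) = ∑ c, Real.negMulLog (pC c) from rfl,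
    show (∑ c, ∑ a, Real.negMulLog (∑ b, p a b c)) = ∑ c, ∑ a, Real.negMulLog (pAC a c) from rfl,
    show (∑ b, ∑ c, Real.negMulLog (∑ a, p a b c)) = ∑ b, ∑ c, Real.negMulLog (pBC b c) from rfl,
    e0, e1, e2, e3]
  linarith

private lemma entH_comp_inj' {Ω : Type*} [MeasurableSpace Ω] (μ : Measure Ω)
    {S T : Type*} [Fintype S] [Fintype T] (e : S → T) (he : Function.Injective e)
    (W : Ω → S) :
    (∑ t : T, Real.negMulLog ((μ ((fun ω => e (W ω)) ⁻¹' {t})).toReal))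
      = ∑ s : S, Real.negMulLog ((μ (W ⁻¹' {s})).toReal) := by
  classical
  have hzero : ∀ t ∉ Finset.univ.image e,
      Real.negMulLog ((μ ((fun ω => e (W ω)) ⁻¹' {t})).toReal) = 0 := by
    intro t ht
    have : (fun ω => e (W ω)) ⁻¹' {t} = ∅ := by
      ext ω
      simp only [Set.mem_preimage, Set.mem_singleton_iff, Set.mem_empty_iff_false, iff_false]
      intro h
      exact ht (Finset.mem_image.2 ⟨W ω, Finset.mem_univ _, h⟩)
    simp [this]
  calc (∑ t : T, Real.negMulLog ((μ ((fun ω => e (W ω)) ⁻¹' {t})).toReal))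
      = ∑ t ∈ Finset.univ.image e,
          Real.negMulLog ((μ ((fun ω => e (W ω)) ⁻¹' {t})).toReal) :=
        (Finset.sum_subset (Finset.subset_univ _) (fun t _ ht => hzero t ht)).symm
    _ = ∑ s : S, Real.negMulLog ((μ ((fun ω => e (W ω)) ⁻¹' {e s})).toReal) :=
        Finset.sum_image (fun x _ y _ h => he h)
    _ = ∑ s : S, Real.negMulLog ((μ (W ⁻¹' {s})).toReal) := by
        refine Finset.sum_congr rfl fun s _ => ?_
        have hset : (fun ω => e (W ω)) ⁻¹' {e s} = W ⁻¹' {s} := by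
          ext ω; simp [he.eq_iff]
        rw [hset]

private lemma measure_eq_sum_fiber {Ω : Type*} [MeasurableSpace Ω] (μ : Measure Ω)
    {S : Type*} [Fintype S] [MeasurableSpace S] [MeasurableSingletonClass S]
    {g : Ω → S} (hg : Measurable g) (E : Set Ω) :
    μ E = ∑ s : S, μ (E ∩ g ⁻¹' {s}) := by
  have h1 : ∀ s : S, μ (E ∩ g ⁻¹' {s}) = μ.restrict E (g ⁻¹' {s}) := by
    intro s
    rw [Measure.restrict_apply (hg (measurableSet_singleton s)), Set.inter_comm]
  simp only [h1]
  rw [sum_measure_preimage_singleton (μ := μ.restrict E) Finset.univ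
    (fun s _ => hg (measurableSet_singleton s))]
  simp [Measure.restrict_apply_univ]

private lemma entH_comp_inj {Ω : Type*} [MeasurableSpace Ω] (μ : Measure Ω)
    {S T : Type*} [Fintype S] [Fintype T] (e : S → T) (he : Function.Injective e)
    (W : Ω → S) :
    entH μ (fun ω => e (W ω)) = entH μ W :=
  entH_comp_inj' μ e he W
private lemma condMI_nonneg {Ω : Type*} [MeasurableSpace Ω] (μ : Measure Ω)
    [IsProbabilityMeasure μ]
    {A B C : Type*} [Fintype A] [Fintype B] [Fintype C]
    [MeasurableSpace A] [MeasurableSingletonClass A]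
    [MeasurableSpace B] [MeasurableSingletonClass B]
    [MeasurableSpace C] [MeasurableSingletonClass C]
    (fA : Ω → A) (fB : Ω → B) (fC : Ω → C)
    (hA : Measurable fA) (hB : Measurable fB) (hC : Measurable fC) :
    0 ≤ condMI μ fA fB fC := by
  classical
  set F : Ω → A × B × C := fun ω => (fA ω, fB ω, fC ω) with hF_def
  have hF : Measurable F := hA.prodMk (hB.prodMk hC)
  set p : A × B × C → ℝ := fun x => (μ (F ⁻¹' {x})).toReal with hp_def
  have hp0 : ∀ x, 0 ≤ p x := fun x => ENNReal.toReal_nonneg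
  have hfin : ∀ (s : Set Ω), μ s ≠ ⊤ := fun s => measure_ne_top μ s
  -- total mass one
  have hp1' : ∑ x : A × B × C, p x = 1 := by
    have h := measure_eq_sum_fiber μ hF Set.univ
    simp only [Set.univ_inter] at h
    have h2 : (μ Set.univ).toReal = 1 := by simp
    rw [h, ENNReal.toReal_sum (fun _ _ => hfin _)] at h2
    exact h2
  have hp1 : ∑ a, ∑ b, ∑ c, p (a, b, c) = 1 := by
    rw [← hp1']; simp [Fintype.sum_prod_type]
  -- entropy identities
  have hH3 : entH μ F = ∑ a, ∑ b, ∑ c, Real.negMulLog (p (a, b, c)) := by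
    rw [show entH μ F = ∑ x : A × B × C, Real.negMulLog (p x) from rfl]
    simp [Fintype.sum_prod_type]
  have hHBCA : entH μ (fun ω => ((fB ω, fC ω), fA ω)) = entH μ F :=
    entH_comp_inj' μ (fun x : A × B × C => ((x.2.1, x.2.2), x.1))
      (fun x y h => by
        obtain ⟨a, b, c⟩ := x; obtain ⟨a', b', c'⟩ := y
        simp_all [Prod.ext_iff]) F
  have hHBC : entH μ (fun ω => (fB ω, fC ω))
      = ∑ b, ∑ c, Real.negMulLog (∑ a, p (a, b, c)) := by
    rw [show entH μ (fun ω => (fB ω, fC ω))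
      = ∑ bc : B × C, Real.negMulLog ((μ ((fun ω => (fB ω, fC ω)) ⁻¹' {bc})).toReal) from rfl]
    rw [show (∑ bc : B × C, Real.negMulLog ((μ ((fun ω => (fB ω, fC ω)) ⁻¹' {bc})).toReal))
      = ∑ b, ∑ c, Real.negMulLog ((μ ((fun ω => (fB ω, fC ω)) ⁻¹' {(b, c)})).toReal) from by
        simp [Fintype.sum_prod_type]]
    refine Finset.sum_congr rfl fun b _ => Finset.sum_congr rfl fun c _ => ?_
    congr 1
    rw [measure_eq_sum_fiber μ hA ((fun ω => (fB ω, fC ω)) ⁻¹' {(b, c)}),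
      ENNReal.toReal_sum (fun _ _ => hfin _)]
    refine Finset.sum_congr rfl fun a _ => ?_
    refine congr_arg ENNReal.toReal (congr_arg (fun t => μ t) ?_)
    ext ω
    simp [hF_def, Prod.ext_iff, and_assoc, and_comm, and_left_comm]
  have hHCA : entH μ (fun ω => (fC ω, fA ω))
      = ∑ c, ∑ a, Real.negMulLog (∑ b, p (a, b, c)) := by
    rw [show entH μ (fun ω => (fC ω, fA ω))
      = ∑ ca : C × A, Real.negMulLog ((μ ((fun ω => (fC ω, fA ω)) ⁻¹' {ca})).toReal) from rfl]
    rw [show (∑ ca : C × A, Real.negMulLog ((μ ((fun ω => (fC ω, fA ω)) ⁻¹' {ca})).toReal))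
      = ∑ c, ∑ a, Real.negMulLog ((μ ((fun ω => (fC ω, fA ω)) ⁻¹' {(c, a)})).toReal) from by
        simp [Fintype.sum_prod_type]]
    refine Finset.sum_congr rfl fun c _ => Finset.sum_congr rfl fun a _ => ?_
    congr 1
    rw [measure_eq_sum_fiber μ hB ((fun ω => (fC ω, fA ω)) ⁻¹' {(c, a)}),
      ENNReal.toReal_sum (fun _ _ => hfin _)]
    refine Finset.sum_congr rfl fun b _ => ?_
    refine congr_arg ENNReal.toReal (congr_arg (fun t => μ t) ?_)
    ext ω
    simp [hF_def, Prod.ext_iff, and_assoc, and_comm, and_left_comm]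
  have hHC : entH μ fC = ∑ c, Real.negMulLog (∑ a, ∑ b, p (a, b, c)) := by
    rw [show entH μ fC = ∑ c : C, Real.negMulLog ((μ (fC ⁻¹' {c})).toReal) from rfl]
    refine Finset.sum_congr rfl fun c _ => ?_
    congr 1
    rw [measure_eq_sum_fiber μ (hA.prodMk hB) (fC ⁻¹' {c}),
      ENNReal.toReal_sum (fun _ _ => hfin _)]
    rw [show (∑ s : A × B, (μ (fC ⁻¹' {c} ∩ (fun ω => (fA ω, fB ω)) ⁻¹' {s})).toReal)
      = ∑ a, ∑ b, (μ (fC ⁻¹' {c} ∩ (fun ω => (fA ω, fB ω)) ⁻¹' {(a, b)})).toReal from by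
        simp [Fintype.sum_prod_type]]
    refine Finset.sum_congr rfl fun a _ => Finset.sum_congr rfl fun b _ => ?_
    refine congr_arg ENNReal.toReal (congr_arg (fun t => μ t) ?_)
    ext ω
    simp [hF_def, Prod.ext_iff, and_assoc, and_comm, and_left_comm]
  -- assemble
  have key := findist (fun a b c => p (a, b, c)) (fun a b c => hp0 _) hp1
  simp only [condMI, condEntH]
  rw [show entH μ (fun ω => ((fun ω' => (fB ω', fC ω')) ω, fA ω))
      = entH μ (fun ω => ((fB ω, fC ω), fA ω)) from rfl]
  rw [hHBCA, hH3, hHBC, hHCA, hHC]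
  linarith


/-- **Redundancy is bounded by single-call information.**
If `Z i` is conditionally independent of `Z_{<i}` given `(X, Y)`, i.e.
`I(Z i; Z_{<i} | X, Y) = 0`, then `I(Z i; Z_{<i} | X) ≤ I(Z i; Y | X)`. -/
theorem redundancy_le_single_call_information
    {Ω : Type*} [MeasurableSpace Ω] (μ : Measure Ω) [IsProbabilityMeasure μ]
    {𝓧 𝓨 : Type*} [Fintype 𝓧] [Nonempty 𝓧] [Fintype 𝓨] [Nonempty 𝓨]
    [MeasurableSpace 𝓧] [DiscreteMeasurableSpace 𝓧]
    [MeasurableSpace 𝓨] [DiscreteMeasurableSpace 𝓨]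
    {n : ℕ} {𝓩 : Fin n → Type*} [∀ i, Fintype (𝓩 i)] [∀ i, Nonempty (𝓩 i)]
    [∀ i, MeasurableSpace (𝓩 i)] [∀ i, DiscreteMeasurableSpace (𝓩 i)]
    (X : Ω → 𝓧) (Y : Ω → 𝓨) (Z : ∀ i, Ω → 𝓩 i)
    (hX : Measurable X) (hY : Measurable Y) (hZ : ∀ i, Measurable (Z i))
    (i : Fin n)
    (hCI : condMI μ (Z i) (fun ω (j : Fin i.val) => Z (Fin.castLE i.isLt.le j) ω)
        (fun ω => (X ω, Y ω)) = 0) :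
    condMI μ (Z i) (fun ω (j : Fin i.val) => Z (Fin.castLE i.isLt.le j) ω) X
      ≤ condMI μ (Z i) Y X := by
  classical
  set A := Z i with hA_def
  set B : Ω → (∀ j : Fin i.val, 𝓩 (Fin.castLE i.isLt.le j)) :=
    fun ω (j : Fin i.val) => Z (Fin.castLE i.isLt.le j) ω with hB_def
  have hB : Measurable B := measurable_pi_lambda _ fun j => hZ _
  have nonneg : 0 ≤ condMI μ A Y (fun ω => (B ω, X ω)) :=
    condMI_nonneg μ A Y _ (hZ i) hY (hB.prodMk hX)
  have e1 : entH μ (fun ω => ((Y ω, (B ω, X ω)), A ω))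
      = entH μ (fun ω => ((B ω, (X ω, Y ω)), A ω)) :=
    entH_comp_inj μ
      (fun x : (_ × (𝓧 × 𝓨)) × 𝓩 i => ((x.1.2.2, (x.1.1, x.1.2.1)), x.2))
      (fun x y h => by
        obtain ⟨⟨b, x1, y1⟩, a⟩ := x; obtain ⟨⟨b', x1', y1'⟩, a'⟩ := y
        simp_all [Prod.ext_iff])
      (fun ω => ((B ω, (X ω, Y ω)), A ω))
  have e2 : entH μ (fun ω => (Y ω, (B ω, X ω)))
      = entH μ (fun ω => (B ω, (X ω, Y ω))) :=
    entH_comp_inj μ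
      (fun x : _ × (𝓧 × 𝓨) => (x.2.2, (x.1, x.2.1)))
      (fun x y h => by
        obtain ⟨b, x1, y1⟩ := x; obtain ⟨b', x1', y1'⟩ := y
        simp_all [Prod.ext_iff])
      (fun ω => (B ω, (X ω, Y ω)))
  have e3 : entH μ (fun ω => ((X ω, Y ω), A ω))
      = entH μ (fun ω => ((Y ω, X ω), A ω)) :=
    entH_comp_inj μ
      (fun x : (𝓨 × 𝓧) × 𝓩 i => ((x.1.2, x.1.1), x.2))
      (fun x y h => by
        obtain ⟨⟨y1, x1⟩, a⟩ := x; obtain ⟨⟨y1', x1'⟩, a'⟩ := y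
        simp_all [Prod.ext_iff])
      (fun ω => ((Y ω, X ω), A ω))
  have e4 : entH μ (fun ω => (X ω, Y ω)) = entH μ (fun ω => (Y ω, X ω)) :=
    entH_comp_inj μ (fun x : 𝓨 × 𝓧 => (x.2, x.1))
      (fun x y h => by
        obtain ⟨y1, x1⟩ := x; obtain ⟨y1', x1'⟩ := y
        simp_all [Prod.ext_iff])
      (fun ω => (Y ω, X ω))
  simp only [condMI, condEntH] at hCI nonneg ⊢
  linarith [hCI, nonneg, e1, e2, e3, e4]
end

section
/- Let X, Y and Z_1, …, Z_n be finitely-valued random variables on a common probability space P. For each i ∈ {1, …, n}, define I_i^max as the supremum, over all values z of Z_{<i} = (Z_1, …, Z_{i−1}) with P(Z_{<i} = z) > 0, of the conditional mutual information I(Z_i; Y | X) computed under the conditional probability measure P(· | Z_{<i} = z). Then I(Z_{1:n}; Y | X) ≤ min( H(Y | X), ∑_{i=1}^n I_i^max ). -/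
/-!
Swapping the roles of `Z` and `Y`, `I(Z; Y | X) = H(Y | X) - H(Y | Z, X) ≤ H(Y | X)`, since
conditional entropy is nonnegative. Telescoping `H(Y | Z_{<k}, X)` over `k` gives the chain rule
`I(Z; Y | X) = ∑ᵢ I(Zᵢ; Y | Z_{<i}, X)`, and each term is the average, weighted by
`P(Z_{<i} = z)`, of `I(Zᵢ; Y | X)` under `P(· | Z_{<i} = z)`; an average is at most the supremum
`I_i^max` over histories `z` of positive probability.
-/

open MeasureTheory ProbabilityTheory

section Entropy

variable {Ω : Type*} [MeasurableSpace Ω] {μ : Measure Ω}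

theorem entH_comp_of_injective {S T : Type*} [Fintype S] [Fintype T] {g : S → T}
    (hg : Function.Injective g) (X : Ω → S) : entH μ (g ∘ X) = entH μ X := by
  refine (Fintype.sum_of_injective g hg _ _ (fun t ht => ?_) fun s => ?_).symm
  · have : g ∘ X ⁻¹' {t} = ∅ :=
      Set.eq_empty_of_forall_notMem fun ω hω => ht ⟨X ω, hω⟩
    simp [this]
  · rw [Set.preimage_comp, ← Set.image_singleton, hg.preimage_image]

theorem condEntH_comp_right_of_injective {S T U : Type*} [Fintype S] [Fintype T] [Fintype U]
    {g : S → T} (hg : Function.Injective g) (A : Ω → U) (V : Ω → S) :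
    condEntH μ A (g ∘ V) = condEntH μ A V := by
  have hg' : Function.Injective (Prod.map g (id : U → U)) := hg.prodMap Function.injective_id
  exact congrArg₂ _ (entH_comp_of_injective hg' (fun ω => (V ω, A ω)))
    (entH_comp_of_injective hg V)

theorem condMI_comm {A B C : Type*} [Fintype A] [Fintype B] [Fintype C]
    (fA : Ω → A) (fB : Ω → B) (fC : Ω → C) :
    condMI μ fA fB fC = condMI μ fB fA fC := by
  have swapAC := entH_comp_of_injective (μ := μ) Prod.swap_injective fun ω => (fA ω, fC ω)
  have swapBC := entH_comp_of_injective (μ := μ) Prod.swap_injective fun ω => (fB ω, fC ω)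
  have reassoc :
      entH μ (fun ω => ((fB ω, fC ω), fA ω)) = entH μ (fun ω => ((fA ω, fC ω), fB ω)) :=
    entH_comp_of_injective (g := fun p : (A × C) × B => ((p.2, p.1.2), p.1.1))
      (Function.LeftInverse.injective (g := fun q : (B × C) × A => ((q.2, q.1.2), q.1.1))
        fun _ => rfl) fun ω => ((fA ω, fC ω), fB ω)
  simp only [Function.comp_def, Prod.swap_prod_mk] at swapAC swapBC
  simp only [condMI, condEntH]
  linarith

theorem entH_nonneg [IsZeroOrProbabilityMeasure μ] {S : Type*} [Fintype S] (X : Ω → S) :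
    0 ≤ entH μ X :=
  Finset.sum_nonneg fun _ _ => Real.negMulLog_nonneg ENNReal.toReal_nonneg
    (ENNReal.toReal_le_of_le_ofReal zero_le_one (by simpa using prob_le_one))

theorem sum_toReal_measure_preimage_singleton [IsProbabilityMeasure μ] {S : Type*} [Fintype S]
    [MeasurableSpace S] [MeasurableSingletonClass S] {V : Ω → S} (hV : Measurable V) :
    ∑ s : S, (μ (V ⁻¹' {s})).toReal = 1 := by
  rw [← ENNReal.toReal_sum fun s _ => measure_ne_top μ _,
    sum_measure_preimage_singleton _ fun s _ => hV (measurableSet_singleton s)]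
  simp

theorem entH_prod_eq_sum_cond [IsFiniteMeasure μ] {S T : Type*} [Fintype S] [Fintype T]
    [MeasurableSpace S] [MeasurableSpace T] [MeasurableSingletonClass S]
    [MeasurableSingletonClass T] {W : Ω → T} {V : Ω → S}
    (hW : Measurable W) (hV : Measurable V) :
    entH μ (fun ω => (W ω, V ω)) = ∑ w : T, (Real.negMulLog (μ (W ⁻¹' {w})).toReal
      + (μ (W ⁻¹' {w})).toReal * entH μ[|W ⁻¹' {w}] V) := by
  unfold entH
  rw [Fintype.sum_prod_type]
  refine Finset.sum_congr rfl fun w _ => ?_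
  set E := W ⁻¹' {w}
  have hfiber : ∀ s, (μ ((fun ω => (W ω, V ω)) ⁻¹' {(w, s)})).toReal
      = (μ E).toReal * (μ[|E] (V ⁻¹' {s})).toReal := fun s => by
    rw [← ENNReal.toReal_mul, mul_comm, cond_mul_eq_inter (hW (measurableSet_singleton w))]
    congr 2
    ext ω
    simp [Prod.ext_iff]
  by_cases hE : μ E = 0
  · simp [hfiber, hE]
  have := cond_isProbabilityMeasure hE
  simp only [hfiber, Real.negMulLog_mul, Finset.sum_add_distrib, ← Finset.sum_mul,
    ← Finset.mul_sum, sum_toReal_measure_preimage_singleton hV, one_mul]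

theorem condEntH_eq_sum_cond [IsFiniteMeasure μ] {S U : Type*} [Fintype S] [Fintype U]
    [MeasurableSpace S] [MeasurableSpace U] [MeasurableSingletonClass S]
    [MeasurableSingletonClass U] {A : Ω → U} {V : Ω → S}
    (hA : Measurable A) (hV : Measurable V) :
    condEntH μ A V = ∑ v : S, (μ (V ⁻¹' {v})).toReal * entH μ[|V ⁻¹' {v}] A := by
  rw [condEntH, entH_prod_eq_sum_cond hV hA, Finset.sum_add_distrib, entH]
  ring

theorem condEntH_nonneg [IsFiniteMeasure μ] {S U : Type*} [Fintype S] [Fintype U]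
    [MeasurableSpace S] [MeasurableSpace U] [MeasurableSingletonClass S]
    [MeasurableSingletonClass U] {A : Ω → U} {V : Ω → S}
    (hA : Measurable A) (hV : Measurable V) :
    0 ≤ condEntH μ A V := by
  rw [condEntH_eq_sum_cond hA hV]
  exact Finset.sum_nonneg fun v _ => mul_nonneg ENNReal.toReal_nonneg (entH_nonneg A)

theorem condMI_le_condEntH [IsFiniteMeasure μ] {A B C : Type*} [Fintype A] [Fintype B]
    [Fintype C] [MeasurableSpace A] [MeasurableSpace B] [MeasurableSpace C]
    [MeasurableSingletonClass A] [MeasurableSingletonClass B] [MeasurableSingletonClass C]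
    {fA : Ω → A} {fB : Ω → B} {fC : Ω → C}
    (hA : Measurable fA) (hB : Measurable fB) (hC : Measurable fC) :
    condMI μ fA fB fC ≤ condEntH μ fB fC := by
  rw [condMI_comm, condMI, sub_le_self_iff]
  exact condEntH_nonneg hB (hA.prodMk hC)

theorem condEntH_prod_eq_sum_cond [IsFiniteMeasure μ] {S T U : Type*} [Fintype S] [Fintype T]
    [Fintype U] [MeasurableSpace S] [MeasurableSpace T] [MeasurableSpace U]
    [MeasurableSingletonClass S] [MeasurableSingletonClass T] [MeasurableSingletonClass U]
    {A : Ω → U} {W : Ω → T} {C : Ω → S} (hA : Measurable A) (hW : Measurable W)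
    (hC : Measurable C) :
    condEntH μ A (fun ω => (W ω, C ω))
      = ∑ w : T, (μ (W ⁻¹' {w})).toReal * condEntH μ[|W ⁻¹' {w}] A C := by
  have reassoc :
      entH μ (fun ω => ((W ω, C ω), A ω)) = entH μ (fun ω => (W ω, (C ω, A ω))) :=
    entH_comp_of_injective (Equiv.prodAssoc T S U).symm.injective fun ω => (W ω, (C ω, A ω))
  rw [condEntH, reassoc, entH_prod_eq_sum_cond hW (hC.prodMk hA), entH_prod_eq_sum_cond hW hC,
    ← Finset.sum_sub_distrib]
  refine Finset.sum_congr rfl fun w _ => ?_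
  rw [condEntH]
  ring

theorem condMI_prod_eq_sum_cond [IsFiniteMeasure μ] {A B C T : Type*} [Fintype A] [Fintype B]
    [Fintype C] [Fintype T] [MeasurableSpace A] [MeasurableSpace B] [MeasurableSpace C]
    [MeasurableSpace T] [MeasurableSingletonClass A] [MeasurableSingletonClass B]
    [MeasurableSingletonClass C] [MeasurableSingletonClass T]
    {fA : Ω → A} {fB : Ω → B} {fC : Ω → C} {W : Ω → T} (hA : Measurable fA)
    (hB : Measurable fB) (hC : Measurable fC) (hW : Measurable W) :
    condMI μ fA fB (fun ω => (W ω, fC ω))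
      = ∑ w : T, (μ (W ⁻¹' {w})).toReal * condMI μ[|W ⁻¹' {w}] fA fB fC := by
  have reorder : condEntH μ fA (fun ω => (fB ω, (W ω, fC ω)))
      = condEntH μ fA (fun ω => (W ω, (fB ω, fC ω))) :=
    condEntH_comp_right_of_injective (g := fun p : T × (B × C) => (p.2.1, (p.1, p.2.2)))
      (Function.LeftInverse.injective (g := fun q : B × (T × C) => (q.2.1, (q.1, q.2.2)))
        fun _ => rfl) fA fun ω => (W ω, (fB ω, fC ω))
  rw [condMI, reorder, condEntH_prod_eq_sum_cond hA hW hC,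
    condEntH_prod_eq_sum_cond hA hW (hB.prodMk hC), ← Finset.sum_sub_distrib]
  simp only [condMI, mul_sub]

theorem sum_toReal_mul_le_sSup [IsProbabilityMeasure μ] {T : Type*} [Fintype T]
    [MeasurableSpace T] [MeasurableSingletonClass T] {W : Ω → T} (hW : Measurable W)
    (f : T → ℝ) :
    ∑ w : T, (μ (W ⁻¹' {w})).toReal * f w
      ≤ sSup {r : ℝ | ∃ w, μ (W ⁻¹' {w}) ≠ 0 ∧ r = f w} := by
  have hbdd : BddAbove {r : ℝ | ∃ w, μ (W ⁻¹' {w}) ≠ 0 ∧ r = f w} :=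
    (Set.finite_range f).bddAbove.mono <| by rintro _ ⟨w, -, rfl⟩; exact ⟨w, rfl⟩
  calc ∑ w : T, (μ (W ⁻¹' {w})).toReal * f w
      ≤ ∑ w : T, (μ (W ⁻¹' {w})).toReal
          * sSup {r : ℝ | ∃ w, μ (W ⁻¹' {w}) ≠ 0 ∧ r = f w} := by
        refine Finset.sum_le_sum fun w _ => ?_
        by_cases hw : μ (W ⁻¹' {w}) = 0
        · simp [hw]
        · exact mul_le_mul_of_nonneg_left (le_csSup hbdd ⟨w, hw, rfl⟩) ENNReal.toReal_nonneg
    _ = sSup {r : ℝ | ∃ w, μ (W ⁻¹' {w}) ≠ 0 ∧ r = f w} := by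
        rw [← Finset.sum_mul, sum_toReal_measure_preimage_singleton hW, one_mul]

end Entropy

section Pipeline

variable {Ω : Type*} [MeasurableSpace Ω] {n : ℕ} {𝓩 : Fin n → Type*}

/-- `Z_{<k} = (Z 0, …, Z (k-1))`: indices are `0`-based, so `Z_{<i}` precedes `Z i`. -/
def history (Z : ∀ i, Ω → 𝓩 i) {k : ℕ} (hk : k ≤ n) (ω : Ω) :
    ∀ j : Fin k, 𝓩 (Fin.castLE hk j) :=
  fun j => Z (Fin.castLE hk j) ω

theorem measurable_history [∀ i, MeasurableSpace (𝓩 i)] {Z : ∀ i, Ω → 𝓩 i}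
    (hZ : ∀ i, Measurable (Z i)) {k : ℕ} (hk : k ≤ n) : Measurable (history Z hk) :=
  measurable_pi_lambda _ fun _ => hZ _

variable {μ : Measure Ω} [∀ i, Fintype (𝓩 i)] {S U : Type*} [Fintype S] [Fintype U]

theorem condEntH_history_succ (Z : ∀ i, Ω → 𝓩 i) (A : Ω → U) (X : Ω → S) {k : ℕ}
    (hk : k + 1 ≤ n) :
    condEntH μ A (fun ω => (Z ⟨k, hk⟩ ω, (history Z (Nat.le_of_succ_le hk) ω, X ω)))
      = condEntH μ A (fun ω => (history Z hk ω, X ω)) := by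
  refine condEntH_comp_right_of_injective
    (g := fun p : (∀ j : Fin (k + 1), 𝓩 (Fin.castLE hk j)) × S =>
      ((p.1 (Fin.last k) : 𝓩 ⟨k, hk⟩),
        ((fun j : Fin k => p.1 j.castSucc :
            ∀ j : Fin k, 𝓩 (Fin.castLE (Nat.le_of_succ_le hk) j)), p.2)))
    (fun p q h => ?_) A fun ω => (history Z hk ω, X ω)
  simp only [Prod.mk.injEq] at h
  refine Prod.ext (funext fun j => ?_) h.2.2
  induction j using Fin.lastCases with
  | last => exact h.1
  | cast j => exact congrFun h.2.1 j

theorem condMI_pi_eq_sum_condMI_history (Z : ∀ i, Ω → 𝓩 i) (Y : Ω → U) (X : Ω → S) :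
    condMI μ (fun ω i => Z i ω) Y X
      = ∑ i : Fin n, condMI μ (Z i) Y (fun ω => (history Z i.isLt.le ω, X ω)) := by
  set G : Fin (n + 1) → ℝ := fun k => condEntH μ Y (fun ω => (history Z k.is_le ω, X ω))
  have hG0 : G 0 = condEntH μ Y X :=
    (condEntH_comp_right_of_injective (μ := μ)
      (fun p q h => Prod.ext (funext fun j => j.elim0) h) Y
      fun ω => (history Z (Nat.zero_le n) ω, X ω)).symm
  have hGlast : G (Fin.last n) = condEntH μ Y (fun ω => ((fun i => Z i ω), X ω)) := rfl
  calc condMI μ (fun ω i => Z i ω) Y X = G 0 - G (Fin.last n) := by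
        rw [condMI_comm, condMI, hG0, hGlast]
    _ = ∑ i : Fin n, (G i.castSucc - G i.succ) := by
        rw [Finset.sum_sub_distrib]
        linarith [Fin.sum_univ_succ G, Fin.sum_univ_castSucc G]
    _ = _ := by
        refine Finset.sum_congr rfl fun i _ => ?_
        rw [condMI_comm, condMI, condEntH_history_succ]

end Pipeline

theorem sequential_pipeline_upper_bound_general
    {Ω : Type*} [MeasurableSpace Ω] (μ : Measure Ω) [IsProbabilityMeasure μ]
    {𝓧 𝓨 : Type*} [Fintype 𝓧] [Fintype 𝓨]
    [MeasurableSpace 𝓧] [DiscreteMeasurableSpace 𝓧]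
    [MeasurableSpace 𝓨] [DiscreteMeasurableSpace 𝓨]
    {n : ℕ} {𝓩 : Fin n → Type*} [∀ i, Fintype (𝓩 i)]
    [∀ i, MeasurableSpace (𝓩 i)] [∀ i, DiscreteMeasurableSpace (𝓩 i)]
    (X : Ω → 𝓧) (Y : Ω → 𝓨) (Z : ∀ i, Ω → 𝓩 i)
    (hX : Measurable X) (hY : Measurable Y) (hZ : ∀ i, Measurable (Z i))
    (Imax : Fin n → ℝ)
    (hImax : ∀ i : Fin n, Imax i = sSup {r : ℝ |
        ∃ z : (∀ j : Fin i.val, 𝓩 (Fin.castLE i.isLt.le j)),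
          μ ((fun ω (j : Fin i.val) => Z (Fin.castLE i.isLt.le j) ω) ⁻¹' {z}) ≠ 0 ∧
          r = condMI (μ[|(fun ω (j : Fin i.val) => Z (Fin.castLE i.isLt.le j) ω) ⁻¹' {z}])
                (Z i) Y X}) :
    condMI μ (fun ω (i : Fin n) => Z i ω) Y X
      ≤ min (condEntH μ Y X) (∑ i : Fin n, Imax i) := by
  refine le_min (condMI_le_condEntH (measurable_pi_lambda _ hZ) hY hX) ?_
  rw [condMI_pi_eq_sum_condMI_history]
  refine Finset.sum_le_sum fun i _ => ?_
  have hW := measurable_history hZ i.isLt.le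
  rw [condMI_prod_eq_sum_cond (hZ i) hY hX hW, hImax i]
  exact sum_toReal_mul_le_sSup hW _

/-- **Sequential pipeline upper bound.**
With `I_i^max` the supremum over positive-probability histories `z` of `Z_{<i}` of
`I(Z i; Y | X)` computed under the conditional measure `μ[| Z_{<i} = z]`, any sequential MAS
satisfies `I(Z_{1:n}; Y | X) ≤ min (H(Y | X)) (∑ i, I_i^max)`. -/
theorem sequential_pipeline_upper_bound
    {Ω : Type*} [MeasurableSpace Ω] (μ : Measure Ω) [IsProbabilityMeasure μ]
    {𝓧 𝓨 : Type*} [Fintype 𝓧] [Nonempty 𝓧] [Fintype 𝓨] [Nonempty 𝓨]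
    [MeasurableSpace 𝓧] [DiscreteMeasurableSpace 𝓧]
    [MeasurableSpace 𝓨] [DiscreteMeasurableSpace 𝓨]
    {n : ℕ} {𝓩 : Fin n → Type*} [∀ i, Fintype (𝓩 i)] [∀ i, Nonempty (𝓩 i)]
    [∀ i, MeasurableSpace (𝓩 i)] [∀ i, DiscreteMeasurableSpace (𝓩 i)]
    (X : Ω → 𝓧) (Y : Ω → 𝓨) (Z : ∀ i, Ω → 𝓩 i)
    (hX : Measurable X) (hY : Measurable Y) (hZ : ∀ i, Measurable (Z i))
    (Imax : Fin n → ℝ)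
    (hImax : ∀ i : Fin n, Imax i = sSup {r : ℝ |
        ∃ z : (∀ j : Fin i.val, 𝓩 (Fin.castLE i.isLt.le j)),
          μ ((fun ω (j : Fin i.val) => Z (Fin.castLE i.isLt.le j) ω) ⁻¹' {z}) ≠ 0 ∧
          r = condMI (μ[|(fun ω (j : Fin i.val) => Z (Fin.castLE i.isLt.le j) ω) ⁻¹' {z}])
                (Z i) Y X}) :
    condMI μ (fun ω (i : Fin n) => Z i ω) Y X
      ≤ min (condEntH μ Y X) (∑ i : Fin n, Imax i) :=
  sequential_pipeline_upper_bound_general μ X Y Z hX hY hZ Imax hImax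
end
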